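/- arXiv:1010.0225 — 7 statements merged into one kernel-verified Lean document; each statement's English description precedes it below -/
import Mathlib

section
/- If an ETL frame has perfect recall with respect to history consistency (local version) PR_hcl, then it has perfect recall with respect to history consistency PR_hc. -/
attribute [local instance] Classical.propDecidable

/-- A protocol is a prefix-closed set of histories. -/
def PrefixClosed {E : Type*} (H : Set (List E)) : Prop :=
  ∀ g h : List E, g <+: h → h ∈ H → g ∈ H

/-- Perfect recall with respect to history consistency. -/
def PRhc {E : Type*} (H : Set (List E)) (sim : List E → List E → Prop) : Prop :=
  ∀ (h h' : List E) (e : E), h ∈ H → h ++ [e] ∈ H → h' ∈ H → sim (h ++ [e]) h' →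
    ∃ h'', h'' ∈ H ∧ sim h h'' ∧ h'' <+: h'

/-- Perfect recall with respect to history consistency, local version. -/
def PRhcl {E : Type*} (H : Set (List E)) (sim : List E → List E → Prop) : Prop :=
  ∀ (h h' : List E) (e : E), h ∈ H → h ++ [e] ∈ H → h' ∈ H → sim (h ++ [e]) h' →
    sim h h' ∨
    (∃ (h'' : List E) (e'' : E), h'' ∈ H ∧ sim h h'' ∧ h' = h'' ++ [e'']) ∨
    (∃ (h'' : List E) (e'' : E), h'' ∈ H ∧ sim (h ++ [e]) h'' ∧ h' = h'' ++ [e''])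

/-- The information set of a history. -/
def infoSet {E : Type*} (H : Set (List E)) (sim : List E → List E → Prop) (h : List E) :
    Set (List E) := {h' | h' ∈ H ∧ sim h h'}

/-- The epistemic experience along a history (information sets over all prefixes, in order),
with consecutive repetitions of identical sets removed (destuttered). -/
noncomputable def EEd {E : Type*} (H : Set (List E)) (sim : List E → List E → Prop)
    (h : List E) : List (Set (List E)) :=
  ((List.range (h.length + 1)).map fun n => infoSet H sim (h.take n)).destutter (· ≠ ·)

/-- Perfect recall with respect to epistemic experience: accessible histories have
equivalent epistemic experiences modulo stutterings. -/
def PRee {E : Type*} (H : Set (List E)) (sim : List E → List E → Prop) : Prop :=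
  ∀ h h' : List E, h ∈ H → h' ∈ H → sim h h' → EEd H sim h = EEd H sim h'

def TransOn {E : Type*} (H : Set (List E)) (sim : List E → List E → Prop) : Prop :=
  ∀ a b c : List E, a ∈ H → b ∈ H → c ∈ H → sim a b → sim b c → sim a c

def EuclOn {E : Type*} (H : Set (List E)) (sim : List E → List E → Prop) : Prop :=
  ∀ a b c : List E, a ∈ H → b ∈ H → c ∈ H → sim a b → sim a c → sim b c

/-- S5: the accessibility relation is an equivalence relation on the protocol. -/
def S5on {E : Type*} (H : Set (List E)) (sim : List E → List E → Prop) : Prop :=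
  (∀ h ∈ H, sim h h) ∧ (∀ h h' : List E, sim h h' → sim h' h) ∧
    (∀ a b c : List E, sim a b → sim b c → sim a c)

/-- Synchronous perfect recall. -/
def sPR {E : Type*} (H : Set (List E)) (sim : List E → List E → Prop) : Prop :=
  ∀ (h h' : List E) (e : E), h ∈ H → h ++ [e] ∈ H → h' ∈ H → sim (h ++ [e]) h' →
    ∃ (h'' : List E) (e' : E), h'' ∈ H ∧ sim h h'' ∧ h' = h'' ++ [e']

/-- Weak synchronous perfect recall. -/
def wsPR {E : Type*} (H : Set (List E)) (sim : List E → List E → Prop) : Prop :=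
  ∀ (h h' : List E) (e e' : E), h ∈ H → h' ∈ H → h ++ [e] ∈ H → h' ++ [e'] ∈ H →
    sim (h ++ [e]) (h' ++ [e']) → sim h h'

/-- The reflexive-symmetric closure (= S5 closure on introspective frames). -/
def S5cl {E : Type*} (sim : List E → List E → Prop) (h h' : List E) : Prop :=
  h = h' ∨ sim h h' ∨ sim h' h

def PersistentInsanity {E : Type*} (H : Set (List E)) (sim : List E → List E → Prop) : Prop :=
  ∀ h h' : List E, h ∈ H → h' ∈ H → infoSet H sim h = ∅ → h <+: h' → infoSet H sim h' = ∅


/-- Peel off the last event of `h'` for as long as the third alternative of `PRhcl` applies;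
the first two alternatives stop the descent with the required prefix. -/
theorem PRhcl.exists_prefix_sim {E : Type*} {H : Set (List E)} {sim : List E → List E → Prop}
    (hpr : PRhcl H sim) {h : List E} {e : E} (hh : h ∈ H) (hhe : h ++ [e] ∈ H) (h' : List E) :
    h' ∈ H → sim (h ++ [e]) h' → ∃ h'', h'' ∈ H ∧ sim h h'' ∧ h'' <+: h' := by
  induction h' using List.reverseRecOn with
  | nil =>
    intro hh' hsim
    rcases hpr h [] e hh hhe hh' hsim with hs | ⟨g, a, -, -, hg⟩ | ⟨g, a, -, -, hg⟩
    · exact ⟨[], hh', hs, List.prefix_rfl⟩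
    all_goals exact absurd hg.symm (List.append_ne_nil_of_right_ne_nil g (List.cons_ne_nil a []))
  | append_singleton l a ih =>
    intro hh' hsim
    rcases hpr h (l ++ [a]) e hh hhe hh' hsim with hs | ⟨g, b, hg, hs, hgl⟩ | ⟨g, b, hg, hs, hgl⟩
    · exact ⟨l ++ [a], hh', hs, List.prefix_rfl⟩
    · exact ⟨g, hg, hs, hgl ▸ List.prefix_append g [b]⟩
    · obtain rfl : l = g := (List.append_inj' hgl rfl).1
      obtain ⟨g', hg', hs', hpre⟩ := ih hg hs
      exact ⟨g', hg', hs', hpre.trans (List.prefix_append l [a])⟩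

theorem prhcl_implies_prhc_general {E : Type*} (H : Set (List E))
    (sim : List E → List E → Prop) (hpr : PRhcl H sim) :
    PRhc H sim :=
  fun _ h' _ hh hhe hh' hsim => hpr.exists_prefix_sim hh hhe h' hh' hsim

/-- If an ETL frame has PR_hcl, then it has PR_hc. -/
theorem prhcl_implies_prhc {E : Type*} [Fintype E] (H : Set (List E))
    (sim : List E → List E → Prop) (hH : PrefixClosed H) (hpr : PRhcl H sim) :
    PRhc H sim :=
  prhcl_implies_prhc_general H sim hpr
end

section
/- Any ETL frame that has perfect recall with respect to epistemic experience (PR_ee) has a transitive and Euclidean accessibility relation. -/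
attribute [local instance] Classical.propDecidable

/-! Destuttering keeps the last entry of a list, so the epistemic experience along `h` ends with
`[h]∼`. Hence `PRee` gives `[h]∼ = [h']∼` whenever `h ∼ h'`, and transitivity and euclideanness
follow at once. -/

theorem List.getLast?_destutter'_ne {α : Type*} [DecidableEq α] (l : List α) (a : α) :
    (l.destutter' (· ≠ ·) a).getLast? = (a :: l).getLast? := by
  induction l generalizing a with
  | nil => rfl
  | cons b l ih =>
    by_cases hab : a = b
    · subst hab
      rw [destutter'_cons_neg _ (not_not.2 rfl), ih, getLast?_cons_cons]
    · rw [destutter'_cons_pos _ hab, getLast?_cons, ih, getLast?_cons_cons, getLast?_cons]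
      simp

theorem List.getLast?_destutter_ne {α : Type*} [DecidableEq α] (l : List α) :
    (l.destutter (· ≠ ·)).getLast? = l.getLast? := by
  cases l with
  | nil => rfl
  | cons a l => exact getLast?_destutter'_ne l a

theorem EEd_getLast? {E : Type*} (H : Set (List E)) (sim : List E → List E → Prop)
    (h : List E) : (EEd H sim h).getLast? = some (infoSet H sim h) := by
  simp [EEd, List.getLast?_destutter_ne, List.getLast?_map, List.getLast?_range]

theorem PRee.infoSet_eq {E : Type*} {H : Set (List E)} {sim : List E → List E → Prop}
    (hpr : PRee H sim) {h h' : List E} (hh : h ∈ H) (hh' : h' ∈ H) (hs : sim h h') :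
    infoSet H sim h = infoSet H sim h' :=
  Option.some_injective _ <| by rw [← EEd_getLast?, ← EEd_getLast?, hpr h h' hh hh' hs]

theorem pree_implies_trans_eucl_general {E : Type*} (H : Set (List E))
    (sim : List E → List E → Prop) (hpr : PRee H sim) :
    TransOn H sim ∧ EuclOn H sim := by
  constructor
  · intro a b c ha hb hc hab hbc
    have hc_info : c ∈ infoSet H sim b := ⟨hc, hbc⟩
    rw [← hpr.infoSet_eq ha hb hab] at hc_info
    exact hc_info.2
  · intro a b c ha hb hc hab hac
    have hc_info : c ∈ infoSet H sim a := ⟨hc, hac⟩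
    rw [hpr.infoSet_eq ha hb hab] at hc_info
    exact hc_info.2

/-- Any ETL frame with PR_ee has a transitive and Euclidean accessibility relation. -/
theorem pree_implies_trans_eucl {E : Type*} [Fintype E] (H : Set (List E))
    (sim : List E → List E → Prop) (hH : PrefixClosed H) (hpr : PRee H sim) :
    TransOn H sim ∧ EuclOn H sim :=
  pree_implies_trans_eucl_general H sim hpr
end

section
/- An ETL frame validates the formula ⟨e⟩L p → (L p ∨ L◇p ∨ ⟨e⟩L◇p) for every event e and every valuation of the atom p if and only if the frame has PR_hcl. -/
attribute [local instance] Classical.propDecidable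

/-- Frame validity of `⟨e⟩L p → (L p ∨ L◇p ∨ ⟨e⟩L◇p)`, with `V` the extension of `p`;
the three disjuncts of the conclusion are `L p`, `L◇p` and `⟨e⟩L◇p`. -/
def ValidatesLocalRecallAxiom {E : Type*} (H : Set (List E)) (sim : List E → List E → Prop) :
    Prop :=
  ∀ (V : Set (List E)) (e : E) (h : List E), h ∈ H →
    ((h ++ [e] ∈ H ∧ ∃ g, g ∈ H ∧ sim (h ++ [e]) g ∧ g ∈ V) →
      (∃ g, g ∈ H ∧ sim h g ∧ g ∈ V) ∨
      (∃ g, g ∈ H ∧ sim h g ∧ ∃ e', g ++ [e'] ∈ H ∧ g ++ [e'] ∈ V) ∨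
      (h ++ [e] ∈ H ∧ ∃ g, g ∈ H ∧ sim (h ++ [e]) g ∧
        ∃ e', g ++ [e'] ∈ H ∧ g ++ [e'] ∈ V))

section

variable {E : Type*} {H : Set (List E)} {sim : List E → List E → Prop}

theorem PRhcl.validatesLocalRecallAxiom (hpr : PRhcl H sim) :
    ValidatesLocalRecallAxiom H sim := by
  rintro V e h hh ⟨hhe, g, hg, hsim, hgV⟩
  rcases hpr h g e hh hhe hg hsim with
    hsim' | ⟨g', e', hg', hsim', rfl⟩ | ⟨g', e', hg', hsim', rfl⟩
  · exact Or.inl ⟨g, hg, hsim', hgV⟩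
  · exact Or.inr (Or.inl ⟨g', hg', hsim', e', hg, hgV⟩)
  · exact Or.inr (Or.inr ⟨hhe, g', hg', hsim', e', hg, hgV⟩)

/-- Instantiate the axiom with `p` true exactly at the target history `h'`. -/
theorem ValidatesLocalRecallAxiom.prhcl (hax : ValidatesLocalRecallAxiom H sim) :
    PRhcl H sim := by
  intro h h' e hh hhe hh' hsim
  rcases hax {h'} e h hh ⟨hhe, h', hh', hsim, rfl⟩ with
    ⟨g, -, hsim', rfl⟩ | ⟨g, hg, hsim', e', -, hgV⟩ | ⟨-, g, hg, hsim', e', -, hgV⟩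
  · exact Or.inl hsim'
  · exact Or.inr (Or.inl ⟨g, e', hg, hsim', hgV.symm⟩)
  · exact Or.inr (Or.inr ⟨g, e', hg, hsim', hgV.symm⟩)

end

theorem axiom_iff_prhcl_general {E : Type*} (H : Set (List E))
    (sim : List E → List E → Prop) :
    (∀ (V : Set (List E)) (e : E) (h : List E), h ∈ H →
      ((h ++ [e] ∈ H ∧ ∃ g, g ∈ H ∧ sim (h ++ [e]) g ∧ g ∈ V) →
        (∃ g, g ∈ H ∧ sim h g ∧ g ∈ V) ∨
        (∃ g, g ∈ H ∧ sim h g ∧ ∃ e', g ++ [e'] ∈ H ∧ g ++ [e'] ∈ V) ∨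
        (h ++ [e] ∈ H ∧ ∃ g, g ∈ H ∧ sim (h ++ [e]) g ∧
          ∃ e', g ++ [e'] ∈ H ∧ g ++ [e'] ∈ V)))
    ↔ PRhcl H sim :=
  ⟨ValidatesLocalRecallAxiom.prhcl, PRhcl.validatesLocalRecallAxiom⟩

/-- An ETL frame validates ⟨e⟩L p → (L p ∨ L◇p ∨ ⟨e⟩L◇p), for every event e and
valuation of p, iff it has PR_hcl. -/
theorem axiom_iff_prhcl {E : Type*} [Fintype E] (H : Set (List E))
    (sim : List E → List E → Prop) (hH : PrefixClosed H) :
    (∀ (V : Set (List E)) (e : E) (h : List E), h ∈ H →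
      ((h ++ [e] ∈ H ∧ ∃ g, g ∈ H ∧ sim (h ++ [e]) g ∧ g ∈ V) →
        (∃ g, g ∈ H ∧ sim h g ∧ g ∈ V) ∨
        (∃ g, g ∈ H ∧ sim h g ∧ ∃ e', g ++ [e'] ∈ H ∧ g ++ [e'] ∈ V) ∨
        (h ++ [e] ∈ H ∧ ∃ g, g ∈ H ∧ sim (h ++ [e]) g ∧
          ∃ e', g ++ [e'] ∈ H ∧ g ++ [e'] ∈ V)))
    ↔ PRhcl H sim :=
  axiom_iff_prhcl_general H sim
end

section
/- For any introspective (transitive and Euclidean) ETL frame with PR_hcl, and histories h1, h2 with h1 a prefix of h2 and h1 ∼ h2, for each prefix h1' of h1 there is a prefix h2' of h2 such that h1' ∼ h2'. -/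
/-!
PR_hcl implies PR_hc by induction on the length of the accessible history: in the third
alternative of PR_hcl that history loses its last event and stays accessible from `h ++ [e]`.
With PR_hc one strips the events of `h1` from the end one at a time, each time passing to an
accessible prefix of the current partner history; the prefixes of `h1` stay in the protocol
because it is prefix-closed.
-/

attribute [local instance] Classical.propDecidable

theorem PRhcl.exists_prefix_sim_of_sim_append {E : Type*} {H : Set (List E)}
    {sim : List E → List E → Prop} (hpr : PRhcl H sim) {h h' : List E} {e : E} (hh : h ∈ H)
    (hhe : h ++ [e] ∈ H) (hh' : h' ∈ H) (hs : sim (h ++ [e]) h') :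
    ∃ h'' ∈ H, sim h h'' ∧ h'' <+: h' := by
  rcases hpr h h' e hh hhe hh' hs with
    hs' | ⟨h'', e'', hh'', hs', rfl⟩ | ⟨h'', e'', hh'', hs', rfl⟩
  · exact ⟨h', hh', hs', List.prefix_rfl⟩
  · exact ⟨h'', hh'', hs', List.prefix_append _ _⟩
  · obtain ⟨g, hg, hsg, hgp⟩ := hpr.exists_prefix_sim_of_sim_append hh hhe hh'' hs'
    exact ⟨g, hg, hsg, hgp.trans (List.prefix_append _ _)⟩
termination_by h'.length

theorem PRhcl.prhc {E : Type*} {H : Set (List E)} {sim : List E → List E → Prop}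
    (hpr : PRhcl H sim) : PRhc H sim :=
  fun _ _ _ hh hhe hh' hs => hpr.exists_prefix_sim_of_sim_append hh hhe hh' hs

theorem PRhc.exists_prefix_sim_of_prefix {E : Type*} {H : Set (List E)}
    {sim : List E → List E → Prop} (hpr : PRhc H sim) (hH : PrefixClosed H) {h1 h2 : List E}
    (hh1 : h1 ∈ H) (hh2 : h2 ∈ H) (hs : sim h1 h2) {h1' : List E} (hp : h1' <+: h1) :
    ∃ h2' ∈ H, h2' <+: h2 ∧ sim h1' h2' := by
  induction h1 using List.reverseRecOn generalizing h2 with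
  | nil =>
    obtain rfl := List.prefix_nil.mp hp
    exact ⟨h2, hh2, List.prefix_rfl, hs⟩
  | append_singleton g e ih =>
    rcases List.prefix_concat_iff.mp hp with rfl | hpg
    · exact ⟨h2, hh2, List.prefix_rfl, hs⟩
    have hg : g ∈ H := hH g (g ++ [e]) (List.prefix_append g [e]) hh1
    obtain ⟨h'', hh'', hs'', hp''⟩ := hpr g h2 e hg hh1 hh2 hs
    obtain ⟨h2', hh2', hp2', hs2'⟩ := ih hg hh'' hs'' hpg
    exact ⟨h2', hh2', hp2'.trans hp'', hs2'⟩

theorem acc_along_history_general {E : Type*} (H : Set (List E))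
    (sim : List E → List E → Prop) (hH : PrefixClosed H)
    (hpr : PRhcl H sim)
    (h1 h2 : List E) (hm : h2 ∈ H) (hp : h1 <+: h2) (hs : sim h1 h2) :
    ∀ h1' : List E, h1' <+: h1 → ∃ h2', h2' ∈ H ∧ h2' <+: h2 ∧ sim h1' h2' :=
  fun _ hp' => hpr.prhc.exists_prefix_sim_of_prefix hH (hH h1 h2 hp hm) hm hs hp'

/-- On introspective frames with PR_hcl, accessibility propagates along prefixes. -/
theorem acc_along_history {E : Type*} [Fintype E] (H : Set (List E))
    (sim : List E → List E → Prop) (hH : PrefixClosed H)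
    (ht : TransOn H sim) (he : EuclOn H sim) (hpr : PRhcl H sim)
    (h1 h2 : List E) (hm : h2 ∈ H) (hp : h1 <+: h2) (hs : sim h1 h2) :
    ∀ h1' : List E, h1' <+: h1 → ∃ h2', h2' ∈ H ∧ h2' <+: h2 ∧ sim h1' h2' :=
  acc_along_history_general H sim hH hpr h1 h2 hm hp hs
end

section
/- For any introspective (transitive and Euclidean) ETL frame with PR_hcl, and histories h1, h, h2, h2' with h2' a prefix of h, h a prefix of h2, h1 ∼ h2 and h1 ∼ h2', there holds h1 ≈∼ h where ≈∼ denotes the equivalence closure (reflexive-symmetric-transitive closure) of ∼. -/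
attribute [local instance] Classical.propDecidable

/-! By Euclideanness `h2 ∼ h2'`, so it suffices that a history `c` with `c ∼ d` for a prefix
`d` of `c` is linked in the equivalence closure to every history between `d` and `c`. This
goes by induction on `|c| + |d|`, peeling the last event off `c`: by PR_hcl either the
shortened history `g` is related to `d` or to a prefix of `d`, and then `c ∼ d` together with
the induction hypothesis for `g` (applied to `d` and to `x`) links `c` to every `x` in between;
or `c` itself is related to a shorter prefix of `d`. -/

theorem eqvGen_of_sim_of_prefix {E : Type*} {H : Set (List E)} {sim : List E → List E → Prop}
    (hH : PrefixClosed H) (hpr : PRhcl H sim) {c d x : List E} (hc : c ∈ H) (hd : d ∈ H)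
    (hcd : sim c d) (hdx : d <+: x) (hxc : x <+: c) : Relation.EqvGen sim c x := by
  obtain rfl | ⟨g, e, rfl⟩ := c.eq_nil_or_concat'
  · rw [List.prefix_nil.mp hxc]
    exact .refl _
  obtain rfl | hxg := List.prefix_concat_iff.mp hxc
  · exact .refl _
  have hg : g ∈ H := hH _ _ (List.prefix_append _ _) hc
  obtain ⟨d', hd', hgd', hd'd⟩ | ⟨d', hd', hcd', hd'd, hlt⟩ :
      (∃ d' ∈ H, sim g d' ∧ d' <+: d) ∨
        (∃ d' ∈ H, sim (g ++ [e]) d' ∧ d' <+: d ∧ d'.length < d.length) := by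
    rcases hpr g d e hg hc hd hcd with hgd | ⟨d', _, hd', hgd', rfl⟩ | ⟨d', _, hd', hcd', rfl⟩
    · exact .inl ⟨d, hd, hgd, List.prefix_refl d⟩
    · exact .inl ⟨d', hd', hgd', List.prefix_append _ _⟩
    · exact .inr ⟨d', hd', hcd', List.prefix_append _ _, by simp⟩
  · have hle := hd'd.length_le
    have hg_to : ∀ y, d' <+: y → y <+: g → Relation.EqvGen sim g y := fun y hd'y hyg =>
      eqvGen_of_sim_of_prefix hH hpr hg hd' hgd' hd'y hyg
    have hgd : Relation.EqvGen sim g d := hg_to d hd'd (hdx.trans hxg)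
    exact ((Relation.EqvGen.rel _ _ hcd).trans _ _ _ hgd.symm).trans _ _ _
      (hg_to x (hd'd.trans hdx) hxg)
  · exact eqvGen_of_sim_of_prefix hH hpr hc hd' hcd' (hd'd.trans hdx) hxc
termination_by c.length + d.length
decreasing_by all_goals subst_vars; simp only [List.length_append, List.length_singleton]; omega

theorem flashlight_general {E : Type*} (H : Set (List E))
    (sim : List E → List E → Prop) (hH : PrefixClosed H)
    (he : EuclOn H sim) (hpr : PRhcl H sim)
    (h1 h h2 h2' : List E) (hm1 : h1 ∈ H) (hm2 : h2 ∈ H) (hmh : h ∈ H)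
    (hp1 : h2' <+: h) (hp2 : h <+: h2) (hs1 : sim h1 h2) (hs2 : sim h1 h2') :
    Relation.EqvGen sim h1 h := by
  have hm2' : h2' ∈ H := hH h2' h hp1 hmh
  have hs22' : sim h2 h2' := he h1 h2 h2' hm1 hm2 hm2' hs1 hs2
  exact (Relation.EqvGen.rel _ _ hs1).trans _ _ _
    (eqvGen_of_sim_of_prefix hH hpr hm2 hm2' hs22' hp1 hp2)

/-- "Flashlight" lemma: on introspective frames with PR_hcl, intermediate histories
are related to h1 in the equivalence closure of the accessibility relation. -/
theorem flashlight {E : Type*} [Fintype E] (H : Set (List E))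
    (sim : List E → List E → Prop) (hH : PrefixClosed H)
    (ht : TransOn H sim) (he : EuclOn H sim) (hpr : PRhcl H sim)
    (h1 h h2 h2' : List E) (hm1 : h1 ∈ H) (hm2 : h2 ∈ H) (hmh : h ∈ H)
    (hp1 : h2' <+: h) (hp2 : h <+: h2) (hs1 : sim h1 h2) (hs2 : sim h1 h2') :
    Relation.EqvGen sim h1 h :=
  flashlight_general H sim hH he hpr h1 h h2 h2' hm1 hm2 hmh hp1 hp2 hs1 hs2
end

section
/- PR_hcl implies persistent insanity: in any ETL frame with PR_hcl, if [h]∼ = ∅ and h is a prefix of h', then [h']∼ = ∅. -/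
attribute [local instance] Classical.propDecidable

/-! If `[h]∼ = ∅` and `h ++ [e] ∼ g`, the first two alternatives of PR_hcl would put an element
into `[h]∼`, so only the third remains: `g = g'' ++ [e'']` with `h ++ [e] ∼ g''`. Induction on `g`
therefore shows `[h ++ [e]]∼ = ∅`, and prefix-closure lets this climb one event at a time from `h`
to any extension. -/

theorem persistentInsanity_of_append_singleton {E : Type*} {H : Set (List E)}
    {sim : List E → List E → Prop} (hH : PrefixClosed H)
    (hstep : ∀ (h : List E) (e : E), h ++ [e] ∈ H →
      infoSet H sim h = ∅ → infoSet H sim (h ++ [e]) = ∅) :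
    PersistentInsanity H sim := by
  rintro h _ - hh' hempty ⟨t, rfl⟩
  induction t using List.reverseRecOn with
  | nil => simpa using hempty
  | append_singleton t e ih =>
    rw [← List.append_assoc] at hh' ⊢
    exact hstep (h ++ t) e hh' (ih (hH _ _ (List.prefix_append _ _) hh'))

theorem PRhcl.not_sim_append_singleton {E : Type*} {H : Set (List E)}
    {sim : List E → List E → Prop} (hpr : PRhcl H sim) {h : List E} {e : E} (hh : h ∈ H)
    (hhe : h ++ [e] ∈ H) (hinsane : ∀ g ∈ H, ¬ sim h g) :
    ∀ g ∈ H, ¬ sim (h ++ [e]) g := by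
  intro g
  induction g using List.reverseRecOn with
  | nil =>
    intro hg hs
    rcases hpr h [] e hh hhe hg hs with hs' | ⟨g', -, hg', hs', -⟩ | ⟨g', e', -, -, hnil⟩
    · exact hinsane [] hg hs'
    · exact hinsane g' hg' hs'
    · simp at hnil
  | append_singleton g x ih =>
    intro hg hs
    rcases hpr h _ e hh hhe hg hs with hs' | ⟨g', -, hg', hs', -⟩ | ⟨g', e', hg', hs', heq⟩
    · exact hinsane _ hg hs'
    · exact hinsane g' hg' hs'
    · obtain rfl := (List.append_inj' heq rfl).1
      exact ih hg' hs'

theorem PRhcl.infoSet_append_singleton_eq_empty {E : Type*} {H : Set (List E)}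
    {sim : List E → List E → Prop} (hpr : PRhcl H sim) (hH : PrefixClosed H) {h : List E}
    {e : E} (hhe : h ++ [e] ∈ H) (hempty : infoSet H sim h = ∅) :
    infoSet H sim (h ++ [e]) = ∅ := by
  have hh : h ∈ H := hH _ _ (List.prefix_append _ _) hhe
  have hinsane : ∀ g ∈ H, ¬ sim h g := fun g hg hs =>
    (Set.eq_empty_iff_forall_notMem.1 hempty) g ⟨hg, hs⟩
  exact Set.eq_empty_iff_forall_notMem.2 fun g ⟨hg, hs⟩ =>
    hpr.not_sim_append_singleton hh hhe hinsane g hg hs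

theorem prhcl_implies_persistent_insanity_general {E : Type*} (H : Set (List E))
    (sim : List E → List E → Prop) (hH : PrefixClosed H) (hpr : PRhcl H sim) :
    PersistentInsanity H sim :=
  persistentInsanity_of_append_singleton hH fun _ _ hhe =>
    hpr.infoSet_append_singleton_eq_empty hH hhe

/-- PR_hcl implies persistent insanity. -/
theorem prhcl_implies_persistent_insanity {E : Type*} [Fintype E] (H : Set (List E))
    (sim : List E → List E → Prop) (hH : PrefixClosed H) (hpr : PRhcl H sim) :
    PersistentInsanity H sim :=
  prhcl_implies_persistent_insanity_general H sim hH hpr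
end

section
/- An introspective (transitive and Euclidean) ETL tree has PR (i.e., both PR_ee and PR_hcl) if and only if it has PR_hcl. -/
attribute [local instance] Classical.propDecidable

/-!
Related histories have the same information set, since `sim` is transitive and Euclidean. Hence
the destuttered experiences of `h ++ [e] ∼ h'` agree by induction on `|h| + |h'|`, following the
three cases of PR_hcl. The induction bottoms out at a history `h'` related to the root, and there
every prefix of `h'` must carry the root's information set `C`.

That last fact rests on shortest elements. If `u` is a shortest element of the information set of
`p ++ [q]`, then PR_hcl at `(p, u, q)` gives either `p ∼ u` or `u = a ++ [b]` with `p ∼ a` (the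
third alternative would produce a shorter element). Descending along the prefixes of a shortest
element `s` of a class shows that either the class is `C` or `s` has a reflexive parent, so by
strong induction `C` contains a history no longer than any reflexive one. With `u` shortest in
`C`, the second alternative is then impossible, so information sets equal to `C` propagate from
`p ++ [q]` to `p`.
-/

namespace List

variable {α : Type*} [DecidableEq α]

theorem destutter'_ne_concat : ∀ (l : List α) (a x : α),
    (l ++ [x]).destutter' (· ≠ ·) a =
      if (a :: l).getLast (cons_ne_nil a l) = x then l.destutter' (· ≠ ·) a
      else l.destutter' (· ≠ ·) a ++ [x]
  | [], a, x => by by_cases h : a = x <;> simp [h]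
  | b :: l, a, x => by
    rw [cons_append, destutter'_cons, destutter'_cons, destutter'_ne_concat l b,
      destutter'_ne_concat l a, getLast_cons_cons]
    by_cases hab : a = b
    · subst hab; simp
    · simp only [ne_eq, hab, not_false_eq_true, if_true]
      split <;> rfl

theorem destutter_ne_concat (l : List α) (x : α) :
    (l ++ [x]).destutter (· ≠ ·) =
      if l.getLast? = some x then l.destutter (· ≠ ·) else l.destutter (· ≠ ·) ++ [x] := by
  cases l with
  | nil => simp
  | cons a l => simp only [cons_append, destutter_cons', destutter'_ne_concat,
      getLast?_eq_some_getLast (cons_ne_nil a l), Option.some_inj]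

end List

theorem exists_mem_forall_length_le {α : Type*} {S : Set (List α)} (hS : S.Nonempty) :
    ∃ u ∈ S, ∀ v ∈ S, u.length ≤ v.length := by
  obtain ⟨u, hu, hmin⟩ := (measure List.length).wf.has_min S hS
  exact ⟨u, hu, fun v hv => not_lt.1 (hmin v hv)⟩

section

variable {E : Type*} {H : Set (List E)} {sim : List E → List E → Prop}

theorem infoSet_eq_of_sim (ht : TransOn H sim) (he : EuclOn H sim) {a b : List E}
    (ha : a ∈ H) (hb : b ∈ H) (hab : sim a b) : infoSet H sim a = infoSet H sim b := by
  ext x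
  exact ⟨fun ⟨hx, hax⟩ => ⟨hx, he a b x ha hb hx hab hax⟩,
    fun ⟨hx, hbx⟩ => ⟨hx, ht a b x ha hb hx hab hbx⟩⟩

variable (H sim) in
theorem EEd_nil : EEd H sim [] = [infoSet H sim []] := by
  simp [EEd]

variable (H sim) in
theorem EEd_concat (g : List E) (e : E) :
    EEd H sim (g ++ [e]) = if infoSet H sim g = infoSet H sim (g ++ [e]) then EEd H sim g
      else EEd H sim g ++ [infoSet H sim (g ++ [e])] := by
  have hmap : (List.range ((g ++ [e]).length + 1)).map
        (fun n => infoSet H sim ((g ++ [e]).take n)) =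
      (List.range (g.length + 1)).map (fun n => infoSet H sim (g.take n)) ++
        [infoSet H sim (g ++ [e])] := by
    rw [List.length_append, List.length_singleton, List.range_succ, List.map_append]
    congr 1
    · refine List.map_congr_left fun n hn => ?_
      rw [List.take_append_of_le_length (by simpa [Nat.lt_succ_iff] using hn)]
    · rw [List.map_singleton, List.take_of_length_le (by simp)]
  have hlast : ((List.range (g.length + 1)).map fun n => infoSet H sim (g.take n)).getLast? =
      some (infoSet H sim g) := by
    simp [List.range_succ]
  rw [EEd, EEd, hmap, List.destutter_ne_concat, hlast]
  simp only [Option.some_inj]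

theorem EEd_concat_of_infoSet_eq {g : List E} {e : E}
    (h : infoSet H sim g = infoSet H sim (g ++ [e])) : EEd H sim (g ++ [e]) = EEd H sim g := by
  rw [EEd_concat, if_pos h]

theorem EEd_eq_singleton_of_forall_prefix {h : List E}
    (hpre : ∀ p, p <+: h → infoSet H sim p = infoSet H sim []) :
    EEd H sim h = [infoSet H sim []] := by
  induction h using List.reverseRecOn with
  | nil => exact EEd_nil H sim
  | append_singleton g e ih =>
    have hg : ∀ p, p <+: g → infoSet H sim p = infoSet H sim [] :=
      fun p hp => hpre p (hp.trans (List.prefix_append g [e]))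
    rw [EEd_concat_of_infoSet_eq (by rw [hg g List.prefix_rfl, hpre _ List.prefix_rfl]), ih hg]

theorem PRhcl.sim_or_eq_concat_of_minimal (hcl : PRhcl H sim) {p u : List E} {q : E}
    (hp : p ∈ H) (hpq : p ++ [q] ∈ H) (hu : u ∈ infoSet H sim (p ++ [q]))
    (hmin : ∀ v ∈ infoSet H sim (p ++ [q]), u.length ≤ v.length) :
    sim p u ∨ ∃ a b, a ∈ H ∧ sim p a ∧ u = a ++ [b] := by
  rcases hcl p u q hp hpq hu.1 hu.2 with hpu | ⟨a, b, ha, hpa, rfl⟩ | ⟨v, b, hv, hv', rfl⟩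
  · exact .inl hpu
  · exact .inr ⟨a, b, ha, hpa, rfl⟩
  · have := hmin v ⟨hv, hv'⟩
    simp at this

theorem PRhcl.infoSet_nil_eq_or_exists_concat (hH : PrefixClosed H) (ht : TransOn H sim)
    (he : EuclOn H sim) (hcl : PRhcl H sim) {s : List E} (hs : s ∈ infoSet H sim s)
    (hmin : ∀ v ∈ infoSet H sim s, s.length ≤ v.length) :
    ∀ x ∈ H, infoSet H sim x = infoSet H sim s →
      infoSet H sim [] = infoSet H sim s ∨ ∃ a b, a ∈ H ∧ sim a a ∧ s = a ++ [b] := by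
  intro x
  induction x using List.reverseRecOn with
  | nil => exact fun _ => .inl
  | append_singleton p q ih =>
    intro hx hI
    have hp : p ∈ H := hH p _ (List.prefix_append p [q]) hx
    rcases hcl.sim_or_eq_concat_of_minimal hp hx (hI ▸ hs) (hI ▸ hmin) with
      hps | ⟨a, b, ha, hpa, rfl⟩
    · exact ih hp (infoSet_eq_of_sim ht he hp hs.1 hps)
    · exact .inr ⟨a, b, ha, he p a a hp ha ha hpa hpa, rfl⟩

theorem PRhcl.exists_mem_infoSet_nil_length_le (hH : PrefixClosed H) (ht : TransOn H sim)
    (he : EuclOn H sim) (hcl : PRhcl H sim) {s : List E} (hs : s ∈ H) (hss : sim s s) :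
    ∃ r ∈ infoSet H sim [], r.length ≤ s.length := by
  obtain ⟨s₀, hs₀, hmin⟩ :=
    exists_mem_forall_length_le (S := infoSet H sim s) ⟨s, hs, hss⟩
  have hI : infoSet H sim s = infoSet H sim s₀ := infoSet_eq_of_sim ht he hs hs₀.1 hs₀.2
  have hlen : s₀.length ≤ s.length := hmin s ⟨hs, hss⟩
  rw [hI] at hs₀ hmin
  rcases hcl.infoSet_nil_eq_or_exists_concat hH ht he hs₀ hmin s₀ hs₀.1 rfl with
    h | ⟨a, b, ha, haa, rfl⟩
  · exact ⟨s₀, h ▸ hs₀, hlen⟩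
  · obtain ⟨r, hr, hra⟩ := hcl.exists_mem_infoSet_nil_length_le hH ht he ha haa
    exact ⟨r, hr, by simp only [List.length_append, List.length_singleton] at hlen; omega⟩
termination_by s.length
decreasing_by simp only [List.length_append, List.length_singleton] at hlen; omega

theorem PRhcl.infoSet_eq_nil_of_concat (hH : PrefixClosed H) (ht : TransOn H sim)
    (he : EuclOn H sim) (hcl : PRhcl H sim) {p : List E} {q : E} (hp : p ∈ H)
    (hpq : p ++ [q] ∈ H) (hI : infoSet H sim (p ++ [q]) = infoSet H sim [])
    (hne : (infoSet H sim []).Nonempty) : infoSet H sim p = infoSet H sim [] := by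
  obtain ⟨u, hu, hmin⟩ := exists_mem_forall_length_le hne
  rw [← hI] at hu hmin
  rcases hcl.sim_or_eq_concat_of_minimal hp hpq hu hmin with hpu | ⟨a, b, ha, hpa, rfl⟩
  · rw [← hI, infoSet_eq_of_sim ht he hp hu.1 hpu, infoSet_eq_of_sim ht he hpq hu.1 hu.2]
  · obtain ⟨r, hr, hra⟩ :=
      hcl.exists_mem_infoSet_nil_length_le hH ht he ha (he p a a hp ha ha hpa hpa)
    have := hmin r (hI ▸ hr)
    simp only [List.length_append, List.length_singleton] at this
    omega

theorem PRhcl.infoSet_eq_nil_of_prefix (hH : PrefixClosed H) (ht : TransOn H sim)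
    (he : EuclOn H sim) (hcl : PRhcl H sim) (hne : (infoSet H sim []).Nonempty) {x : List E}
    (hx : x ∈ H) (hI : infoSet H sim x = infoSet H sim []) :
    ∀ p, p <+: x → infoSet H sim p = infoSet H sim [] := by
  induction x using List.reverseRecOn with
  | nil => rintro p hp; rw [List.prefix_nil.1 hp]
  | append_singleton y q ih =>
    have hy : y ∈ H := hH y _ (List.prefix_append y [q]) hx
    intro p hp
    rcases List.prefix_concat_iff.1 hp with rfl | hpy
    · exact hI
    · exact ih hy (hcl.infoSet_eq_nil_of_concat hH ht he hy hx hI hne) p hpy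

theorem PRhcl.EEd_eq_of_sim (hH : PrefixClosed H) (ht : TransOn H sim) (he : EuclOn H sim)
    (hcl : PRhcl H sim) {h h' : List E} (hh : h ∈ H) (hh' : h' ∈ H) (hsim : sim h h') :
    EEd H sim h = EEd H sim h' := by
  obtain rfl | ⟨g, e, rfl⟩ := h.eq_nil_or_concat'
  · have hroot : [] ∈ H := hH [] h' List.nil_prefix hh'
    have hI := (infoSet_eq_of_sim ht he hroot hh' hsim).symm
    rw [EEd_nil, EEd_eq_singleton_of_forall_prefix
      (hcl.infoSet_eq_nil_of_prefix hH ht he ⟨h', hh', hsim⟩ hh' hI)]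
  have hg : g ∈ H := hH g _ (List.prefix_append g [e]) hh
  rcases hcl g h' e hg hh hh' hsim with
    hgh' | ⟨g', e', hg', hgg', rfl⟩ | ⟨g', e', hg', hhg', rfl⟩
  · rw [EEd_concat_of_infoSet_eq (by rw [infoSet_eq_of_sim ht he hg hh' hgh',
      infoSet_eq_of_sim ht he hh hh' hsim]), hcl.EEd_eq_of_sim hH ht he hg hh' hgh']
  · rw [EEd_concat, EEd_concat, infoSet_eq_of_sim ht he hh hh' hsim,
      infoSet_eq_of_sim ht he hg hg' hgg', hcl.EEd_eq_of_sim hH ht he hg hg' hgg']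
  · rw [EEd_concat_of_infoSet_eq (infoSet_eq_of_sim ht he hg' hh'
      (he _ g' _ hh hg' hh' hhg' hsim)), hcl.EEd_eq_of_sim hH ht he hh hg' hhg']
termination_by h.length + h'.length

end

theorem tree_pr_iff_prhcl_general {E : Type*} (H : Set (List E))
    (sim : List E → List E → Prop) (hH : PrefixClosed H)
    (ht : TransOn H sim) (he : EuclOn H sim) :
    (PRee H sim ∧ PRhcl H sim) ↔ PRhcl H sim :=
  ⟨And.right, fun hcl => ⟨fun _ _ => hcl.EEd_eq_of_sim hH ht he, hcl⟩⟩

/-- An introspective ETL tree has PR (PR_ee and PR_hcl) iff it has PR_hcl. -/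
theorem tree_pr_iff_prhcl {E : Type*} [Fintype E] (H : Set (List E))
    (sim : List E → List E → Prop) (hH : PrefixClosed H) (hroot : ([] : List E) ∈ H)
    (ht : TransOn H sim) (he : EuclOn H sim) :
    (PRee H sim ∧ PRhcl H sim) ↔ PRhcl H sim :=
  tree_pr_iff_prhcl_general H sim hH ht he
end
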